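/- arXiv:1702.07155 — 6 statements merged into one kernel-verified Lean document; each statement's English description precedes it below -/
import Mathlib

section
/- Let (X,G,K) be a G-complete G-metric type space satisfying the rectangle-type inequality G(x,y,z) ≤ K[G(x,w,w) + G(w,y,z)] for all x,y,z,w. Let T : X → X be such that each Tⁿ is Lipschitzian and Lip(Tⁿ) → 0 as n → ∞. Then T has a (unique) fixed point x* ∈ X if and only if the orbit {Tⁿx : n ≥ 1} is bounded for some x ∈ X (i.e., sup over the orbit of G is finite). -/
open Filter Topology

/-- A `G`-metric type space structure on `X` with constant `K`. -/
structure IsGMetricType {X : Type*} (G : X → X → X → ℝ) (K : ℝ) : Prop where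
  K_ge_one : 1 ≤ K
  nonneg : ∀ x y z, 0 ≤ G x y z
  eq_zero : ∀ x, G x x x = 0
  pos : ∀ x y, x ≠ y → 0 < G x x y
  axG3 : ∀ x y z, z ≠ y → G x x y ≤ G x y z
  symm_left : ∀ x y z, G x y z = G y x z
  symm_right : ∀ x y z, G x y z = G x z y
  polygon : ∀ (x y z : X) (n : ℕ) (w : Fin (n + 1) → X),
    G x y z ≤ K * (G x (w 0) (w 0)
      + (∑ i : Fin n, G (w i.castSucc) (w i.succ) (w i.succ))
      + G (w (Fin.last n)) y z)

/-- A `G`-metric type space with the rectangle-type inequality (G5') instead of (G5). -/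
structure IsGMetricTypeRect {X : Type*} (G : X → X → X → ℝ) (K : ℝ) : Prop where
  K_ge_one : 1 ≤ K
  nonneg : ∀ x y z, 0 ≤ G x y z
  eq_zero : ∀ x, G x x x = 0
  pos : ∀ x y, x ≠ y → 0 < G x x y
  axG3 : ∀ x y z, z ≠ y → G x x y ≤ G x y z
  symm_left : ∀ x y z, G x y z = G y x z
  symm_right : ∀ x y z, G x y z = G x z y
  rect : ∀ x y z w, G x y z ≤ K * (G x w w + G w y z)

/-- `G`-convergence of a sequence to a point. -/
def GConverges {X : Type*} (G : X → X → X → ℝ) (s : ℕ → X) (x : X) : Prop :=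
  Tendsto (fun n => G x (s n) (s n)) atTop (nhds 0)

/-- `G`-Cauchy sequence. -/
def GCauchySeq {X : Type*} (G : X → X → X → ℝ) (s : ℕ → X) : Prop :=
  ∀ ε > 0, ∃ N, ∀ m n, N ≤ m → N ≤ n → G (s n) (s m) (s m) < ε

/-- `G`-completeness. -/
def GComplete {X : Type*} (G : X → X → X → ℝ) : Prop :=
  ∀ s : ℕ → X, GCauchySeq G s → ∃ x, GConverges G s x

theorem stmt4 {X : Type*} (G : X → X → X → ℝ) (K : ℝ) (hG : IsGMetricTypeRect G K)
    (hcomp : GComplete G) (T : X → X) (lip : ℕ → ℝ)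
    (hlipnn : ∀ n, 0 ≤ lip n)
    (hlip : ∀ (n : ℕ) (x y z : X), G (T^[n] x) (T^[n] y) (T^[n] z) ≤ lip n * G x y z)
    (hlip0 : Tendsto lip atTop (nhds 0)) :
    (∃! xs : X, T xs = xs) ↔
      ∃ (x : X) (C : ℝ), ∀ m n l : ℕ, 1 ≤ m → 1 ≤ n → 1 ≤ l →
        G (T^[m] x) (T^[n] x) (T^[l] x) ≤ C := by

  constructor
  · rintro ⟨xs, hxs, _⟩
    refine ⟨xs, 0, fun m n l _ _ _ => ?_⟩
    simp [Function.iterate_fixed hxs, hG.eq_zero]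
  · rintro ⟨x, C, hC⟩
    have hK : (0:ℝ) < K := lt_of_lt_of_le one_pos hG.K_ge_one
    have flip : ∀ a b : X, G b a a ≤ 2 * K * G a b b := by
      intro a b
      calc G b a a = G a a b := by rw [hG.symm_left b a a, hG.symm_right a b a]
        _ ≤ K * (G a b b + G b a b) := hG.rect a a b b
        _ = 2 * K * G a b b := by rw [hG.symm_left b a b]; ring
    have hC0 : 0 ≤ C := le_trans (hG.nonneg _ _ _) (hC 1 1 1 le_rfl le_rfl le_rfl)
    set s : ℕ → X := fun n => T^[n+1] x with hs
    have hcauchy : GCauchySeq G s := by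
      intro ε hε
      have hCp : (0:ℝ) < C + 1 := by linarith
      have hpos : 0 < ε / (C+1) := div_pos hε hCp
      obtain ⟨N, hN⟩ := (hlip0.eventually_lt_const hpos).exists
      refine ⟨N, fun m n hm hn => ?_⟩
      have h1 : s n = T^[N] (T^[n+1-N] x) := by
        simp only [hs, ← Function.iterate_add_apply]
        congr 1; omega
      have h2 : s m = T^[N] (T^[m+1-N] x) := by
        simp only [hs, ← Function.iterate_add_apply]
        congr 1; omega
      calc G (s n) (s m) (s m)
          ≤ lip N * G (T^[n+1-N] x) (T^[m+1-N] x) (T^[m+1-N] x) := by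
            rw [h1, h2]; exact hlip N _ _ _
        _ ≤ lip N * C :=
            mul_le_mul_of_nonneg_left (hC _ _ _ (by omega) (by omega) (by omega)) (hlipnn N)
        _ ≤ lip N * (C+1) := by nlinarith [hlipnn N]
        _ < ε / (C+1) * (C+1) := by
            exact mul_lt_mul_of_pos_right hN hCp
        _ = ε := div_mul_cancel₀ ε (ne_of_gt hCp)
    obtain ⟨xs, hxs⟩ := hcomp s hcauchy
    have hsucc : ∀ n : ℕ, s (n+1) = T (s n) := by
      intro n
      simp only [hs]
      rw [Function.iterate_succ_apply']
    have hb : ∀ n, G xs (T xs) (T xs)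
        ≤ K * (G xs (s (n+1)) (s (n+1)) + lip 1 * (2 * K * G xs (s n) (s n))) := by
      intro n
      have h1 : G (s (n+1)) (T xs) (T xs) ≤ lip 1 * (2 * K * G xs (s n) (s n)) := by
        have h2 : G (s (n+1)) (T xs) (T xs) ≤ lip 1 * G (s n) xs xs := by
          have := hlip 1 (s n) xs xs
          simpa [hsucc n] using this
        refine h2.trans ?_
        exact mul_le_mul_of_nonneg_left (flip xs (s n)) (hlipnn 1)
      calc G xs (T xs) (T xs)
          ≤ K * (G xs (s (n+1)) (s (n+1)) + G (s (n+1)) (T xs) (T xs)) :=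
            hG.rect xs (T xs) (T xs) (s (n+1))
        _ ≤ K * (G xs (s (n+1)) (s (n+1)) + lip 1 * (2 * K * G xs (s n) (s n))) := by
            have := h1; nlinarith
    have t1 : Tendsto (fun n => G xs (s (n+1)) (s (n+1))) atTop (nhds 0) :=
      hxs.comp (tendsto_add_atTop_nat 1)
    have t2 : Tendsto
        (fun n => K * (G xs (s (n+1)) (s (n+1)) + lip 1 * (2 * K * G xs (s n) (s n))))
        atTop (nhds 0) := by
      have := ((t1.add (((hxs.const_mul (2*K)).const_mul (lip 1)))).const_mul K)
      simpa using this
    have hzero : G xs (T xs) (T xs) ≤ 0 := ge_of_tendsto' t2 hb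
    have hzero' : G xs (T xs) (T xs) = 0 := le_antisymm hzero (hG.nonneg _ _ _)
    have hfix : T xs = xs := by
      by_contra h
      have hne : xs ≠ T xs := fun e => h e.symm
      have hp : 0 < G xs xs (T xs) := hG.pos xs (T xs) hne
      have he : G xs xs (T xs) = G (T xs) xs xs := by
        rw [hG.symm_right xs xs (T xs), hG.symm_left xs (T xs) xs]
      have := flip xs (T xs)
      rw [← he] at this
      rw [hzero'] at this
      nlinarith
    refine ⟨xs, hfix, fun q hq => ?_⟩
    have hq0 : G q xs xs = 0 := by
      have hb2 : ∀ n, G q xs xs ≤ lip n * G q xs xs := by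
        intro n
        have := hlip n q xs xs
        rwa [Function.iterate_fixed hq, Function.iterate_fixed hfix] at this
      have t3 : Tendsto (fun n => lip n * G q xs xs) atTop (nhds 0) := by
        simpa using hlip0.mul_const (G q xs xs)
      exact le_antisymm (ge_of_tendsto' t3 hb2) (hG.nonneg _ _ _)
    by_contra h
    have hp : 0 < G q q xs := hG.pos q xs h
    have he : G q q xs = G xs q q := by
      rw [hG.symm_right q q xs, hG.symm_left q xs q]
    have := flip q xs
    rw [← he] at this
    rw [hq0] at this
    nlinarith
end

section
/- Let (X,G,K) be a G-complete G-metric type space, T : X → X sequentially continuous, F : [0,∞) → [0,∞) continuous, non-decreasing, subadditive, homogeneous of degree s, with F⁻¹({0}) = {0}. Suppose there exist sequences (aₙ),(bₙ) in X such that with Δ_{i,j,k} := G(aᵢ,aⱼ,a_k) and Γ_{i,j,k} := G(bᵢ,bⱼ,b_k), all in [0,1/2), one has F(G(Tⁱx,Tʲy,Tᵏz)) ≤ F(Δ_{i,j,k}[G(x,Tⁱx,Tⁱx)+G(y,Tʲy,Tʲy)+G(z,Tᵏz,Tᵏz)]) + F(Γ_{i,j,k}·G(x,y,z)) for all x ≠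 y in X, all z, and all i,j,k ≥ 1. If the sequence rᵢ = (Δ_{i,i+1,i+1}ˢ + Γ_{i,i+1,i+1}ˢ)/(1 − (2Δ_{i,i+1,i+1})ˢ) is a non-increasing λ-sequence in ℝ⁺ (with the max metric), then T has a unique fixed point in X. -/
open Filter Topology

/-!
Along the chain `x₀, x₁ = T x₀, x₂ = T² x₁, …, xₙ₊₁ = Tⁿ⁺¹ xₙ`, the contraction with
`(i, j, k) = (n + 1, n + 2, n + 2)` gives `dₙ₊₁ ≤ rₙ₊₁ dₙ` for `dₙ = F (G (xₙ, xₙ₊₁, xₙ₊₁))`,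
and the same for the chain `T xₙ`. Homogeneity makes `F t = F 1 · tˢ`, and a non-increasing
λ-sequence is eventually below some `μ < 1`, so the steps `G (xₙ, xₙ₊₁, xₙ₊₁)` decay
geometrically and `(xₙ)` is `G`-Cauchy with a limit `p`. The cross distances
`wₙ = G (xₙ, T xₙ₊₁, T xₙ₊₁)` obey `wₙ₊₁ ≤ μ wₙ + o(1)`, hence tend to `0`, and continuity of `T`
then forces `T p = p`. A periodic point, which would break the requirement `x ≠ y` along the
chain, is fixed outright, and the contraction with `i = j = k` (where both coefficients vanish)
gives uniqueness.
-/

open Function Finset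

theorem tendsto_zero_of_le_mul_add {u c : ℕ → ℝ} {μ : ℝ} (hμ0 : 0 ≤ μ) (hμ1 : μ < 1)
    (hu : ∀ n, 0 ≤ u n) (hc : Tendsto c atTop (𝓝 0))
    (h : ∀ᶠ n in atTop, u (n + 1) ≤ μ * u n + c n) : Tendsto u atTop (𝓝 0) := by
  refine tendsto_order.2 ⟨fun _ ha => Eventually.of_forall fun n => ha.trans_le (hu n),
    fun ε hε => ?_⟩
  -- The excess `max (u n - ε / 2) 0` eventually contracts by the factor `μ`.
  set w : ℕ → ℝ := fun n => max (u n - ε / 2) 0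
  have hw : ∀ᶠ n in atTop, ‖w (n + 1)‖ ≤ μ * ‖w n‖ := by
    have hsmall : 0 < (1 - μ) * (ε / 2) := by nlinarith
    filter_upwards [h, hc.eventually (ge_mem_nhds hsmall)] with n hn hcn
    rw [Real.norm_of_nonneg (le_max_right _ _), Real.norm_of_nonneg (le_max_right _ _)]
    have := mul_le_mul_of_nonneg_left (le_max_left (u n - ε / 2) 0) hμ0
    exact max_le (by linarith) (by positivity)
  filter_upwards [(summable_of_ratio_norm_eventually_le hμ1 hw).tendsto_atTop_zero.eventually
    (gt_mem_nhds (half_pos hε))] with n hn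
  linarith [le_max_left (u n - ε / 2) 0]

theorem eventually_le_of_sum_Icc_le_mul {r : ℕ → ℝ} {lam μ : ℝ} {N : ℕ}
    (hr : ∀ i, 1 ≤ i → r (i + 1) ≤ r i)
    (hsum : ∀ L, N + 1 ≤ L → ∑ i ∈ Icc 1 (L - 1), r i ≤ lam * L) (hμ : lam < μ) :
    ∀ᶠ m in atTop, r m ≤ μ := by
  have hanti := antitoneOn_nat_Ici_of_succ_le hr
  obtain ⟨M, hM⟩ := exists_nat_gt (lam / (μ - lam))
  filter_upwards [eventually_ge_atTop (max M (N + 1))] with m hm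
  have hm1 : 1 ≤ m := by omega
  have hlow : m * r m ≤ ∑ i ∈ Icc 1 m, r i :=
    calc (m : ℝ) * r m = ∑ _i ∈ Icc 1 m, r m := by simp
      _ ≤ ∑ i ∈ Icc 1 m, r i := sum_le_sum fun i hi =>
        hanti (mem_Icc.1 hi).1 hm1 (mem_Icc.1 hi).2
  have hup := hsum (m + 1) (by omega)
  rw [Nat.add_sub_cancel] at hup
  push_cast at hup
  have hMm : (M : ℝ) ≤ m := by exact_mod_cast (le_max_left M (N + 1)).trans hm
  have hlam : lam < (μ - lam) * m := by
    rw [div_lt_iff₀ (sub_pos.2 hμ)] at hM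
    nlinarith
  have hm0 : (0 : ℝ) < m := by exact_mod_cast hm1
  nlinarith

theorem summable_of_rpow_le_mul {f : ℕ → ℝ} {s μ : ℝ} (hf : ∀ n, 0 ≤ f n) (hs : 0 < s)
    (hμ0 : 0 ≤ μ) (hμ1 : μ < 1) (h : ∀ᶠ n in atTop, f (n + 1) ^ s ≤ μ * f n ^ s) :
    Summable f := by
  refine summable_of_ratio_norm_eventually_le (r := μ ^ s⁻¹)
    (Real.rpow_lt_one hμ0 hμ1 (inv_pos.2 hs)) ?_
  filter_upwards [h] with n hn
  rw [Real.norm_of_nonneg (hf _), Real.norm_of_nonneg (hf _),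
    ← Real.rpow_le_rpow_iff (hf _) (mul_nonneg (Real.rpow_nonneg hμ0 _) (hf _)) hs,
    Real.mul_rpow (Real.rpow_nonneg hμ0 _) (hf _), Real.rpow_inv_rpow hμ0 hs.ne']
  exact hn

theorem tendsto_zero_of_tendsto_rpow {α : Type*} {l : Filter α} {f : α → ℝ} {s : ℝ}
    (hf : ∀ x, 0 ≤ f x) (hs : 0 < s) (h : Tendsto (fun x => f x ^ s) l (𝓝 0)) :
    Tendsto f l (𝓝 0) := by
  have := h.rpow_const (p := s⁻¹) (Or.inr (inv_nonneg.2 hs.le))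
  rw [Real.zero_rpow (inv_ne_zero hs.ne')] at this
  exact this.congr fun x => Real.rpow_rpow_inv (hf x) hs.ne'

def gStep {X : Type*} (G : X → X → X → ℝ) (u : ℕ → X) (n : ℕ) : ℝ :=
  G (u n) (u (n + 1)) (u (n + 1))

namespace IsGMetricType

variable {X : Type*} {G : X → X → X → ℝ} {K : ℝ}

theorem K_pos (hG : IsGMetricType G K) : 0 < K := one_pos.trans_le hG.K_ge_one

theorem rect (hG : IsGMetricType G K) (x y z w : X) : G x y z ≤ K * (G x w w + G w y z) := by
  simpa using hG.polygon x y z 0 fun _ => w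

theorem swap_le (hG : IsGMetricType G K) (x y : X) : G y x x ≤ 2 * K * G x y y := by
  have h := hG.rect x x y y
  rw [hG.symm_left y x y] at h
  rw [hG.symm_left y x x, hG.symm_right x y x]
  linarith

theorem eq_of_G_eq_zero (hG : IsGMetricType G K) {x y : X} (h : G x y y = 0) : x = y := by
  by_contra hxy
  have h' := hG.swap_le x y
  rw [h, mul_zero, hG.symm_left y x x, hG.symm_right x y x] at h'
  exact (hG.pos x y hxy).not_ge h'

theorem le_sum_gStep (hG : IsGMetricType G K) (u : ℕ → X) (n L : ℕ) :
    G (u n) (u (n + L)) (u (n + L)) ≤ K * ∑ i ∈ range L, gStep G u (n + i) := by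
  cases L with
  | zero => simp [hG.eq_zero]
  | succ L =>
    have h := hG.polygon (u n) (u (n + (L + 1))) (u (n + (L + 1))) L fun i => u (n + (i + 1))
    simp only [Fin.val_castSucc, Fin.val_succ, Fin.val_zero, Fin.val_last, hG.eq_zero,
      add_zero] at h
    rw [zero_add, Fin.sum_univ_eq_sum_range
      fun i => G (u (n + (i + 1))) (u (n + (i + 1 + 1))) (u (n + (i + 1 + 1)))] at h
    rwa [sum_range_succ', add_comm (∑ i ∈ range L, _)]

theorem gCauchySeq_of_summable (hG : IsGMetricType G K) {u : ℕ → X}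
    (hu : Summable (gStep G u)) : GCauchySeq G u := by
  set tail : ℕ → ℝ := fun n => ∑' i, gStep G u (i + n)
  have htail : ∀ n m, n ≤ m → G (u n) (u m) (u m) ≤ K * tail n := by
    intro n m hnm
    obtain ⟨L, rfl⟩ := Nat.exists_eq_add_of_le hnm
    refine (hG.le_sum_gStep u n L).trans (mul_le_mul_of_nonneg_left ?_ hG.K_pos.le)
    simp_rw [add_comm n]
    exact ((summable_nat_add_iff n).2 hu).sum_le_tsum _ fun i _ => hG.nonneg _ _ _
  have htail0 : ∀ n, 0 ≤ tail n := fun n => tsum_nonneg fun i => hG.nonneg _ _ _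
  intro ε hε
  obtain ⟨N, hN⟩ := eventually_atTop.1 <| ((tendsto_sum_nat_add (gStep G u)).const_mul
    (2 * K * K)).eventually (gt_mem_nhds (by simpa using hε))
  refine ⟨N, fun m n hm hn => ?_⟩
  have hK := hG.K_ge_one
  rcases le_total n m with h | h
  · have := htail0 n
    calc G (u n) (u m) (u m) ≤ K * tail n := htail n m h
      _ ≤ 2 * K * K * tail n := mul_le_mul_of_nonneg_right (by nlinarith) this
      _ < ε := hN n hn
  · calc G (u n) (u m) (u m) ≤ 2 * K * G (u m) (u n) (u n) := hG.swap_le (u m) (u n)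
      _ ≤ 2 * K * (K * tail m) := mul_le_mul_of_nonneg_left (htail m n h) (by linarith)
      _ < ε := by rw [← mul_assoc]; exact hN m hm

theorem eq_of_gConverges (hG : IsGMetricType G K) {u w : ℕ → X} {x y : X}
    (hx : GConverges G u x) (hy : GConverges G w y)
    (huw : Tendsto (fun n => G (u n) (w n) (w n)) atTop (𝓝 0)) : x = y := by
  have hK := hG.K_pos.le
  have hbound : ∀ n, G x y y ≤ K * (G x (u n) (u n) +
      2 * K * (K * (G y (w n) (w n) + 2 * K * G (u n) (w n) (w n)))) := fun n =>
    calc G x y y ≤ K * (G x (u n) (u n) + G (u n) y y) := hG.rect x y y (u n)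
      _ ≤ _ := by
        gcongr
        refine (hG.swap_le y (u n)).trans (mul_le_mul_of_nonneg_left
          ((hG.rect y (u n) (u n) (w n)).trans ?_) (by positivity))
        gcongr
        exact hG.swap_le (u n) (w n)
  have hlim := ((hx.add (((hy.add (huw.const_mul (2 * K))).const_mul K).const_mul
    (2 * K))).const_mul K)
  simp only [mul_zero, add_zero] at hlim
  exact hG.eq_of_G_eq_zero (le_antisymm (ge_of_tendsto' hlim hbound) (hG.nonneg _ _ _))

end IsGMetricType

def IsGContraction {X : Type*} (G : X → X → X → ℝ) (T : X → X) (F : ℝ → ℝ) (a b : ℕ → X) :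
    Prop :=
  ∀ x y z : X, x ≠ y → ∀ i j k : ℕ, 1 ≤ i → 1 ≤ j → 1 ≤ k →
    F (G (T^[i] x) (T^[j] y) (T^[k] z)) ≤
      F (G (a i) (a j) (a k) *
          (G x (T^[i] x) (T^[i] x) + G y (T^[j] y) (T^[j] y) + G z (T^[k] z) (T^[k] z))) +
        F (G (b i) (b j) (b k) * G x y z)

noncomputable def contractionRatio {X : Type*} (G : X → X → X → ℝ) (a b : ℕ → X) (s : ℝ)
    (i : ℕ) : ℝ :=
  (gStep G a i ^ s + gStep G b i ^ s) / (1 - (2 * gStep G a i) ^ s)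

def iterChain {X : Type*} (T : X → X) (x₀ : X) : ℕ → X
  | 0 => x₀
  | n + 1 => T^[n + 1] (iterChain T x₀ n)

section HomogeneousGauge

variable {F : ℝ → ℝ} {s : ℝ}

theorem eq_rpow_mul_of_homogeneous (hF : ∀ c t, 0 ≤ c → 0 ≤ t → F (c * t) = c ^ s * F t)
    {t : ℝ} (ht : 0 ≤ t) : F t = t ^ s * F 1 := by
  simpa using hF t 1 ht zero_le_one

theorem exponent_le_one_of_subadditive (hF1 : 0 < F 1)
    (hF : ∀ c t, 0 ≤ c → 0 ≤ t → F (c * t) = c ^ s * F t)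
    (hFsub : ∀ u v, 0 ≤ u → 0 ≤ v → F (u + v) ≤ F u + F v) : s ≤ 1 := by
  have h := hFsub 1 1 zero_le_one zero_le_one
  rw [one_add_one_eq_two, eq_rpow_mul_of_homogeneous hF zero_le_two] at h
  rw [← Real.rpow_le_rpow_left_iff one_lt_two, Real.rpow_one]
  nlinarith

theorem IsGContraction.rpow_of_homogeneous {X : Type*} {G : X → X → X → ℝ} {T : X → X}
    {a b : ℕ → X} (hG : ∀ x y z, 0 ≤ G x y z) (hF1 : 0 < F 1)
    (hF : ∀ c t, 0 ≤ c → 0 ≤ t → F (c * t) = c ^ s * F t) (hc : IsGContraction G T F a b) :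
    IsGContraction G T (· ^ s) a b := by
  intro x y z hxy i j k hi hj hk
  have h := hc x y z hxy i j k hi hj hk
  simp only [eq_rpow_mul_of_homogeneous hF (hG _ _ _),
    eq_rpow_mul_of_homogeneous hF (mul_nonneg (hG _ _ _) (hG _ _ _)),
    eq_rpow_mul_of_homogeneous hF
      (mul_nonneg (hG _ _ _) (add_nonneg (add_nonneg (hG _ _ _) (hG _ _ _)) (hG _ _ _))),
    ← add_mul] at h
  exact le_of_mul_le_mul_right h hF1

end HomogeneousGauge

section ContractionRatio

variable {X : Type*} {G : X → X → X → ℝ} {s : ℝ} {a b : ℕ → X} {i : ℕ}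

theorem rpow_two_mul_gStep_lt_one (hG : ∀ x y z, 0 ≤ G x y z) (hs : 0 < s)
    (ha : gStep G a i < 1 / 2) : (2 * gStep G a i) ^ s < 1 :=
  Real.rpow_lt_one (mul_nonneg zero_le_two (hG _ _ _)) (by linarith) hs

theorem rpow_gStep_le_contractionRatio (hG : ∀ x y z, 0 ≤ G x y z) (hs : 0 < s)
    (ha : gStep G a i < 1 / 2) : gStep G b i ^ s ≤ contractionRatio G a b s i := by
  have hβ := Real.rpow_nonneg (mul_nonneg zero_le_two (hG (a i) (a (i + 1)) (a (i + 1)))) s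
  have hΔ := Real.rpow_nonneg (hG (a i) (a (i + 1)) (a (i + 1))) s
  have hΓ := Real.rpow_nonneg (hG (b i) (b (i + 1)) (b (i + 1))) s
  rw [contractionRatio, le_div_iff₀ (sub_pos.2 (rpow_two_mul_gStep_lt_one hG hs ha))]
  unfold gStep
  nlinarith [mul_nonneg hΓ hβ]

end ContractionRatio

theorem ne_iterate_of_periodicPts_eq_empty {X : Type*} {T : X → X} (hper : periodicPts T = ∅)
    (x : X) {n : ℕ} (hn : 0 < n) : x ≠ T^[n] x := fun h =>
  Set.eq_empty_iff_forall_notMem.1 hper x (mk_mem_periodicPts hn h.symm)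

theorem ne_succ_of_periodicPts_eq_empty {X : Type*} {T : X → X} (hper : periodicPts T = ∅)
    {u : ℕ → X} (hu : ∀ n, u (n + 1) = T^[n + 1] (u n)) (n : ℕ) : u n ≠ u (n + 1) :=
  hu n ▸ ne_iterate_of_periodicPts_eq_empty hper _ n.succ_pos

namespace IsGContraction

variable {X : Type*} {G : X → X → X → ℝ} {K : ℝ} {T : X → X} {s : ℝ} {a b : ℕ → X}

theorem eq_of_isPeriodicPt (hc : IsGContraction G T (· ^ s) a b) (hG : IsGMetricType G K)
    (hs : 0 < s) {n : ℕ} (hn : 0 < n) {x y : X} (hx : IsPeriodicPt T n x)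
    (hy : IsPeriodicPt T n y) : x = y := by
  by_contra hxy
  have h := hc x y y hxy n n n hn hn hn
  simp only [hx.eq, hy.eq, hG.eq_zero, zero_mul, Real.zero_rpow hs.ne', add_zero] at h
  refine hxy (hG.eq_of_G_eq_zero (le_antisymm ?_ (hG.nonneg _ _ _)))
  by_contra hpos
  exact (Real.rpow_pos_of_pos (not_le.1 hpos) s).not_ge h

theorem rpow_le_of_ne (hc : IsGContraction G T (· ^ s) a b) (hG : ∀ x y z, 0 ≤ G x y z)
    (hs0 : 0 ≤ s) (hs1 : s ≤ 1) {x y : X} (hxy : x ≠ y) {i : ℕ} (hi : 1 ≤ i) :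
    G (T^[i] x) (T^[i + 1] y) (T^[i + 1] y) ^ s ≤
      gStep G a i ^ s * G x (T^[i] x) (T^[i] x) ^ s +
        (2 * gStep G a i) ^ s * G y (T^[i + 1] y) (T^[i + 1] y) ^ s +
          gStep G b i ^ s * G x y y ^ s := by
  have h := hc x y y hxy i (i + 1) (i + 1) hi (by omega) (by omega)
  set A := G x (T^[i] x) (T^[i] x)
  set E := G y (T^[i + 1] y) (T^[i + 1] y)
  have hA : 0 ≤ A := hG _ _ _
  have hE : 0 ≤ E := hG _ _ _
  have hΔ : 0 ≤ gStep G a i := hG _ _ _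
  have hΓ : 0 ≤ gStep G b i := hG _ _ _
  calc _ ≤ (gStep G a i * (A + 2 * E)) ^ s + (gStep G b i * G x y y) ^ s := by
        simpa only [gStep, two_mul, add_assoc] using h
    _ ≤ gStep G a i ^ s * (A ^ s + (2 * E) ^ s) + gStep G b i ^ s * G x y y ^ s := by
        rw [Real.mul_rpow hΔ (by positivity), Real.mul_rpow hΓ (hG _ _ _)]
        gcongr
        exact Real.rpow_add_le_add_rpow hA (by positivity) hs0 hs1
    _ = _ := by rw [Real.mul_rpow zero_le_two hE, Real.mul_rpow zero_le_two hΔ]; ring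

theorem gStep_succ_rpow_le (hc : IsGContraction G T (· ^ s) a b) (hG : ∀ x y z, 0 ≤ G x y z)
    (hs : 0 < s) (hs1 : s ≤ 1) {n : ℕ} (ha : gStep G a (n + 1) < 1 / 2) {u : ℕ → X}
    (hu : ∀ n, u (n + 1) = T^[n + 1] (u n)) (hne : u n ≠ u (n + 1)) :
    gStep G u (n + 1) ^ s ≤ contractionRatio G a b s (n + 1) * gStep G u n ^ s := by
  have h := hc.rpow_le_of_ne hG hs.le hs1 hne (Nat.le_add_left 1 n)
  rw [← hu n, ← hu (n + 1)] at h
  rw [contractionRatio, div_mul_eq_mul_div,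
    le_div_iff₀ (sub_pos.2 (rpow_two_mul_gStep_lt_one hG hs ha))]
  unfold gStep at h ⊢
  linear_combination h

theorem cross_succ_rpow_le (hc : IsGContraction G T (· ^ s) a b) (hG : ∀ x y z, 0 ≤ G x y z)
    (hs : 0 < s) (hs1 : s ≤ 1) {n : ℕ} (ha : gStep G a (n + 1) < 1 / 2) {u : ℕ → X}
    (hu : ∀ n, u (n + 1) = T^[n + 1] (u n)) (hne : u n ≠ T (u (n + 1))) :
    G (u (n + 1)) (T (u (n + 2))) (T (u (n + 2))) ^ s ≤
      gStep G u n ^ s + gStep G (T ∘ u) (n + 1) ^ s +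
        contractionRatio G a b s (n + 1) * G (u n) (T (u (n + 1))) (T (u (n + 1))) ^ s := by
  have h := hc.rpow_le_of_ne hG hs.le hs1 hne (Nat.le_add_left 1 n)
  rw [← hu n, Commute.iterate_self T (n + 1 + 1) (u (n + 1)), ← hu (n + 1)] at h
  have hΔ : gStep G a (n + 1) ^ s ≤ 1 := Real.rpow_le_one (hG _ _ _) (by linarith) hs.le
  refine h.trans (add_le_add (add_le_add ?_ ?_) ?_)
  · exact mul_le_of_le_one_left (Real.rpow_nonneg (hG _ _ _) s) hΔ
  · exact mul_le_of_le_one_left (Real.rpow_nonneg (hG _ _ _) s)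
      (rpow_two_mul_gStep_lt_one hG hs ha).le
  · exact mul_le_mul_of_nonneg_right (rpow_gStep_le_contractionRatio hG hs ha)
      (Real.rpow_nonneg (hG _ _ _) s)

theorem summable_gStep (hc : IsGContraction G T (· ^ s) a b) (hG : ∀ x y z, 0 ≤ G x y z)
    (hs : 0 < s) (hs1 : s ≤ 1) (ha : ∀ i, 1 ≤ i → gStep G a i < 1 / 2)
    (hratio : ∃ μ < 1, ∀ᶠ i in atTop, contractionRatio G a b s i ≤ μ)
    (hper : periodicPts T = ∅) {u : ℕ → X} (hu : ∀ n, u (n + 1) = T^[n + 1] (u n)) :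
    Summable (gStep G u) := by
  obtain ⟨μ, hμ1, hμ⟩ := hratio
  refine summable_of_rpow_le_mul (fun n => hG _ _ _) hs (le_max_right μ 0)
    (max_lt hμ1 one_pos) ?_
  filter_upwards [(tendsto_add_atTop_nat 1).eventually hμ] with n hn
  exact (hc.gStep_succ_rpow_le hG hs hs1 (ha _ (Nat.le_add_left 1 n)) hu
      (ne_succ_of_periodicPts_eq_empty hper hu n)).trans
    (mul_le_mul_of_nonneg_right (hn.trans (le_max_left μ 0)) (Real.rpow_nonneg (hG _ _ _) s))

theorem tendsto_cross (hc : IsGContraction G T (· ^ s) a b) (hG : ∀ x y z, 0 ≤ G x y z)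
    (hs : 0 < s) (hs1 : s ≤ 1) (ha : ∀ i, 1 ≤ i → gStep G a i < 1 / 2)
    (hratio : ∃ μ < 1, ∀ᶠ i in atTop, contractionRatio G a b s i ≤ μ)
    (hper : periodicPts T = ∅) {u : ℕ → X} (hu : ∀ n, u (n + 1) = T^[n + 1] (u n)) :
    Tendsto (fun n => G (u n) (T (u (n + 1))) (T (u (n + 1)))) atTop (𝓝 0) := by
  have hTu : ∀ n, (T ∘ u) (n + 1) = T^[n + 1] ((T ∘ u) n) := fun n => by
    simp only [comp_apply, hu, Commute.iterate_self T (n + 1) (u n)]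
  have hstep : ∀ {v : ℕ → X}, (∀ n, v (n + 1) = T^[n + 1] (v n)) →
      Tendsto (fun n => gStep G v n ^ s) atTop (𝓝 0) := fun hv => by
    simpa [Real.zero_rpow hs.ne'] using
      (hc.summable_gStep hG hs hs1 ha hratio hper hv).tendsto_atTop_zero.rpow_const
        (Or.inr hs.le)
  obtain ⟨μ, hμ1, hμ⟩ := hratio
  refine tendsto_zero_of_tendsto_rpow (fun n => hG _ _ _) hs <|
    tendsto_zero_of_le_mul_add (le_max_right μ 0) (max_lt hμ1 one_pos)
      (fun n => Real.rpow_nonneg (hG _ _ _) s)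
      (by simpa using (hstep hu).add ((hstep hTu).comp (tendsto_add_atTop_nat 1))) ?_
  filter_upwards [(tendsto_add_atTop_nat 1).eventually hμ] with n hn
  have hne' : u n ≠ T (u (n + 1)) := by
    rw [hu, ← iterate_succ_apply' T]
    exact ne_iterate_of_periodicPts_eq_empty hper _ (n + 1).succ_pos
  refine (hc.cross_succ_rpow_le hG hs hs1 (ha _ (Nat.le_add_left 1 n)) hu hne').trans ?_
  have := mul_le_mul_of_nonneg_right (hn.trans (le_max_left μ 0))
    (Real.rpow_nonneg (hG (u n) (T (u (n + 1))) (T (u (n + 1)))) s)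
  linarith

theorem exists_isFixedPt (hc : IsGContraction G T (· ^ s) a b) (hG : IsGMetricType G K)
    (hcomp : GComplete G)
    (hcont : ∀ (seq : ℕ → X) (x : X), GConverges G seq x →
      GConverges G (fun n => T (seq n)) (T x))
    (hs : 0 < s) (hs1 : s ≤ 1) (ha : ∀ i, 1 ≤ i → gStep G a i < 1 / 2)
    (hratio : ∃ μ < 1, ∀ᶠ i in atTop, contractionRatio G a b s i ≤ μ)
    (hper : periodicPts T = ∅) (x₀ : X) : ∃ p, IsFixedPt T p := by
  set u := iterChain T x₀
  have hu : ∀ n, u (n + 1) = T^[n + 1] (u n) := fun n => rfl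
  obtain ⟨p, hp⟩ := hcomp u <| hG.gCauchySeq_of_summable <|
    hc.summable_gStep hG.nonneg hs hs1 ha hratio hper hu
  have hTp : GConverges G (fun n => T (u (n + 1))) (T p) :=
    hcont _ p (hp.comp (tendsto_add_atTop_nat 1))
  exact ⟨p, (hG.eq_of_gConverges hp hTp
    (hc.tendsto_cross hG.nonneg hs hs1 ha hratio hper hu)).symm⟩

end IsGContraction

theorem stmt12_general {X : Type*} (G : X → X → X → ℝ) (K : ℝ) (hG : IsGMetricType G K)
    (hcomp : GComplete G) (T : X → X)
    (hcont : ∀ (seq : ℕ → X) (x : X), GConverges G seq x →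
      GConverges G (fun n => T (seq n)) (T x))
    (F : ℝ → ℝ) (s : ℝ) (hs : 0 < s)
    (hFnn : ∀ t, 0 ≤ t → 0 ≤ F t)
    (hFsub : ∀ u v, 0 ≤ u → 0 ≤ v → F (u + v) ≤ F u + F v)
    (hFhom : ∀ c t, 0 ≤ c → 0 ≤ t → F (c * t) = c ^ s * F t)
    (hF0 : ∀ t, 0 ≤ t → (F t = 0 ↔ t = 0))
    (a b : ℕ → X)
    (hΔ : ∀ i j k : ℕ, 1 ≤ i → 1 ≤ j → 1 ≤ k → G (a i) (a j) (a k) < 1 / 2)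
    (hcontr : ∀ x y z : X, x ≠ y → ∀ i j k : ℕ, 1 ≤ i → 1 ≤ j → 1 ≤ k →
      F (G (T^[i] x) (T^[j] y) (T^[k] z)) ≤
        F (G (a i) (a j) (a k) *
            (G x (T^[i] x) (T^[i] x) + G y (T^[j] y) (T^[j] y) +
              G z (T^[k] z) (T^[k] z))) +
          F (G (b i) (b j) (b k) * G x y z))
    (r : ℕ → ℝ)
    (hr : ∀ i : ℕ, r i =
      (G (a i) (a (i + 1)) (a (i + 1)) ^ s + G (b i) (b (i + 1)) (b (i + 1)) ^ s) /
        (1 - (2 * G (a i) (a (i + 1)) (a (i + 1))) ^ s))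
    (hdec : ∀ i : ℕ, 1 ≤ i → r (i + 1) ≤ r i)
    (hlamseq : ∃ lam : ℝ, 0 < lam ∧ lam < 1 ∧ ∃ N : ℕ, ∀ L : ℕ, N + 1 ≤ L →
      ∑ i ∈ Finset.Icc 1 (L - 1), r i ≤ lam * L) :
    ∃! xs : X, T xs = xs := by
  have hF1 : 0 < F 1 :=
    (hFnn 1 zero_le_one).lt_of_ne' fun h => one_ne_zero ((hF0 1 zero_le_one).1 h)
  have hs1 : s ≤ 1 := exponent_le_one_of_subadditive hF1 hFhom hFsub
  have hc : IsGContraction G T (· ^ s) a b :=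
    IsGContraction.rpow_of_homogeneous hG.nonneg hF1 hFhom hcontr
  have ha : ∀ i, 1 ≤ i → gStep G a i < 1 / 2 := fun i hi =>
    hΔ i (i + 1) (i + 1) hi (by omega) (by omega)
  have hratio : ∃ μ < 1, ∀ᶠ i in atTop, contractionRatio G a b s i ≤ μ := by
    obtain ⟨lam, -, hlam1, N, hN⟩ := hlamseq
    obtain rfl : r = contractionRatio G a b s := funext hr
    exact ⟨(1 + lam) / 2, by linarith, eventually_le_of_sum_Icc_le_mul hdec hN (by linarith)⟩
  obtain ⟨p, hp⟩ : ∃ p, IsFixedPt T p := by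
    rcases (periodicPts T).eq_empty_or_nonempty with hper | ⟨q, n, hn, hq⟩
    · exact hc.exists_isFixedPt hG hcomp hcont hs hs1 ha hratio hper (a 0)
    · exact ⟨q, hc.eq_of_isPeriodicPt hG hs hn hq.apply hq⟩
  exact ⟨p, hp, fun y hy =>
    hc.eq_of_isPeriodicPt hG hs one_pos (IsFixedPt.isPeriodicPt hy 1) (hp.isPeriodicPt 1)⟩

theorem stmt12 {X : Type*} (G : X → X → X → ℝ) (K : ℝ) (hG : IsGMetricType G K)
    (hcomp : GComplete G) (T : X → X)
    (hcont : ∀ (seq : ℕ → X) (x : X), GConverges G seq x →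
      GConverges G (fun n => T (seq n)) (T x))
    (F : ℝ → ℝ) (s : ℝ) (hs : 0 < s)
    (hFc : ContinuousOn F (Set.Ici 0))
    (hFmono : MonotoneOn F (Set.Ici 0))
    (hFnn : ∀ t, 0 ≤ t → 0 ≤ F t)
    (hFsub : ∀ u v, 0 ≤ u → 0 ≤ v → F (u + v) ≤ F u + F v)
    (hFhom : ∀ c t, 0 ≤ c → 0 ≤ t → F (c * t) = c ^ s * F t)
    (hF0 : ∀ t, 0 ≤ t → (F t = 0 ↔ t = 0))
    (a b : ℕ → X)
    (hΔ : ∀ i j k : ℕ, 1 ≤ i → 1 ≤ j → 1 ≤ k → G (a i) (a j) (a k) < 1 / 2)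
    (hΓ : ∀ i j k : ℕ, 1 ≤ i → 1 ≤ j → 1 ≤ k → G (b i) (b j) (b k) < 1 / 2)
    (hcontr : ∀ x y z : X, x ≠ y → ∀ i j k : ℕ, 1 ≤ i → 1 ≤ j → 1 ≤ k →
      F (G (T^[i] x) (T^[j] y) (T^[k] z)) ≤
        F (G (a i) (a j) (a k) *
            (G x (T^[i] x) (T^[i] x) + G y (T^[j] y) (T^[j] y) +
              G z (T^[k] z) (T^[k] z))) +
          F (G (b i) (b j) (b k) * G x y z))
    (r : ℕ → ℝ)
    (hr : ∀ i : ℕ, r i =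
      (G (a i) (a (i + 1)) (a (i + 1)) ^ s + G (b i) (b (i + 1)) (b (i + 1)) ^ s) /
        (1 - (2 * G (a i) (a (i + 1)) (a (i + 1))) ^ s))
    (hdec : ∀ i : ℕ, 1 ≤ i → r (i + 1) ≤ r i)
    (hlamseq : ∃ lam : ℝ, 0 < lam ∧ lam < 1 ∧ ∃ N : ℕ, ∀ L : ℕ, N + 1 ≤ L →
      ∑ i ∈ Finset.Icc 1 (L - 1), r i ≤ lam * L) :
    ∃! xs : X, T xs = xs :=
  stmt12_general G K hG hcomp T hcont F s hs hFnn hFsub hFhom hF0 a b hΔ hcontr r hr hdec hlamseq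
end

section
/- Within the setting of the common fixed point theorem: if self-maps {Tₙ} on a G-metric type space (X,G,K) satisfy G(Tᵢx,Tⱼy,Tₖz) ≤ Δ_{i,j,k}G(x,y,z) + Θ_{i,j,k}[G(Tᵢx,x,x)+G(y,Tⱼy,y)+G(z,z,Tₖz)] + Λ_{i,j,k}[G(Tᵢx,y,z)+G(x,Tⱼy,z)+G(x,y,Tₖz)] with 0 ≤ Δ_{i,j,k} + 3Θ_{i,j,k} + 4Λ_{i,j,k} < 1/2, then any fixed point of Tᵢ is also a fixed point of Tⱼ and of Tₖ whenever i,j,k are pairwise distinct. -/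
open Filter Topology

theorem stmt14 {X : Type*} (G : X → X → X → ℝ) (K : ℝ) (hG : IsGMetricType G K)
    (T : ℕ → X → X) (Δ Θ Λ : ℕ → ℕ → ℕ → ℝ)
    (hΔnn : ∀ i j k, 0 ≤ Δ i j k) (hΘnn : ∀ i j k, 0 ≤ Θ i j k)
    (hΛnn : ∀ i j k, 0 ≤ Λ i j k)
    (hcoef : ∀ i j k : ℕ, 1 ≤ i → 1 ≤ j → 1 ≤ k →
      Δ i j k + 3 * Θ i j k + 4 * Λ i j k < 1 / 2)
    (hcontr : ∀ (x y z : X) (i j k : ℕ), 1 ≤ i → 1 ≤ j → 1 ≤ k →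
      G (T i x) (T j y) (T k z) ≤
        Δ i j k * G x y z +
          Θ i j k * (G (T i x) x x + G y (T j y) y + G z z (T k z)) +
          Λ i j k * (G (T i x) y z + G x (T j y) z + G x y (T k z))) :
    ∀ i j k : ℕ, 1 ≤ i → 1 ≤ j → 1 ≤ k → i ≠ j → j ≠ k → i ≠ k →
      ∀ xs : X, T i xs = xs → T j xs = xs ∧ T k xs = xs := by
  have key : ∀ i j : ℕ, 1 ≤ i → 1 ≤ j → ∀ xs : X, T i xs = xs → T j xs = xs := by
    intro i j hi hj xs hfix
    by_contra hne
    have hpos : 0 < G xs xs (T j xs) := hG.pos xs (T j xs) (fun h => hne h.symm)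
    have h := hcontr xs xs xs i i j hi hi hj
    rw [hfix, hG.eq_zero] at h
    have hc := hcoef i i j hi hi hj
    nlinarith [hΔnn i i j, hΘnn i i j, hΛnn i i j]
  intro i j k hi hj hk _ _ _ xs hfix
  exact ⟨key i j hi hj xs hfix, key i k hi hk xs hfix⟩
end

section
/- Let (X,G,K) be a G-metric type space and T an orbitally continuous self-map on X that is T-orbitally complete, satisfying G(Tⁿx,Tⁿy,Tⁿz) ≤ aₙ[G(x,Tx,Tx)+G(y,Ty,Ty)+G(z,Tz,Tz)] for all x,y,z and n ≥ 1, with aₙ > 0, 0 ≤ a₁ < 1/2, and aₙ → 0. Then T has a (unique) fixed point x* ∈ X if and only if the orbit {Tⁿx : n ≥ 1} is bounded for some x ∈ X. -/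
open Filter Topology

lemma grect {X : Type*} {G : X → X → X → ℝ} {K : ℝ} (hG : IsGMetricType G K) :
    ∀ x y z w, G x y z ≤ K * (G x w w + G w y z) := by
  intro x y z w
  have := hG.polygon x y z 0 (fun _ => w)
  simpa using this

lemma glim_unique {X : Type*} {G : X → X → X → ℝ} {K : ℝ} (hG : IsGMetricType G K)
    (s : ℕ → X) (u v : X) (hu : GConverges G s u) (hv : GConverges G s v) : u = v := by
  by_contra hne
  have hpos : 0 < G u v v := by
    have := hG.pos v u (fun h => hne h.symm)
    have e1 : G v v u = G u v v := by
      rw [hG.symm_right v v u, hG.symm_left v u v]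
    linarith [e1 ▸ this]
  have hK : (0:ℝ) < K := lt_of_lt_of_le one_pos hG.K_ge_one
  have hbound : ∀ n, G u v v ≤ K * G u (s n) (s n) + 2 * K^2 * G v (s n) (s n) := by
    intro n
    have h1 := grect hG u v v (s n)
    have h2 : G (s n) v v ≤ 2 * K * G v (s n) (s n) := by
      have e : G (s n) v v = G v v (s n) := by
        rw [hG.symm_left (s n) v v, hG.symm_right v (s n) v]
      have h3 := grect hG v v (s n) (s n)
      have e2 : G (s n) v (s n) = G v (s n) (s n) := hG.symm_left (s n) v (s n)
      rw [e, ]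
      calc G v v (s n) ≤ K * (G v (s n) (s n) + G (s n) v (s n)) := h3
        _ = 2 * K * G v (s n) (s n) := by rw [e2]; ring
    nlinarith [hG.nonneg u (s n) (s n), hG.nonneg v (s n) (s n)]
  have htend : Tendsto (fun n => K * G u (s n) (s n) + 2 * K^2 * G v (s n) (s n))
      atTop (nhds 0) := by
    have := (hu.const_mul K).add (hv.const_mul (2 * K^2))
    simpa using this
  have : G u v v ≤ 0 :=
    le_of_tendsto_of_tendsto' tendsto_const_nhds htend hbound
  linarith
theorem stmt16 {X : Type*} (G : X → X → X → ℝ) (K : ℝ) (hG : IsGMetricType G K)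
    (T : X → X)
    (horbcomp : ∀ (a : X) (s : ℕ → X), (∀ n, ∃ k, s n = T^[k] a) →
      GCauchySeq G s → ∃ x, GConverges G s x)
    (horbcont : ∀ (x xs : X) (ni : ℕ → ℕ),
      GConverges G (fun i => T^[ni i] x) xs →
      GConverges G (fun i => T (T^[ni i] x)) (T xs))
    (a : ℕ → ℝ) (hapos : ∀ n, 1 ≤ n → 0 < a n) (ha1 : a 1 < 1 / 2)
    (ha0 : Tendsto a atTop (nhds 0))
    (hcontr : ∀ (x y z : X) (n : ℕ), 1 ≤ n →
      G (T^[n] x) (T^[n] y) (T^[n] z) ≤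
        a n * (G x (T x) (T x) + G y (T y) (T y) + G z (T z) (T z))) :
    (∃! xs : X, T xs = xs) ↔
      ∃ (x : X) (C : ℝ), ∀ m n l : ℕ, 1 ≤ m → 1 ≤ n → 1 ≤ l →
        G (T^[m] x) (T^[n] x) (T^[l] x) ≤ C := by
  constructor
  · rintro ⟨xs, hxs, -⟩
    have hiter : ∀ k, T^[k] xs = xs := by
      intro k; induction k with
      | zero => rfl
      | succ k ih => rw [Function.iterate_succ_apply', ih, hxs]
    exact ⟨xs, 0, fun m n l _ _ _ => by rw [hiter, hiter, hiter, hG.eq_zero]⟩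
  · rintro ⟨x, C, hC⟩
    set D := G x (T x) (T x) with hD
    have hD0 : 0 ≤ D := hG.nonneg _ _ _
    have hC0 : 0 ≤ C :=
      le_trans (hG.nonneg (T^[1] x) (T^[1] x) (T^[1] x)) (hC 1 1 1 le_rfl le_rfl le_rfl)
    set M : ℝ := 3 * (C + D) with hM
    have hM1 : 0 < M + 1 := by nlinarith
    have key1 : ∀ p k, 1 ≤ p → 1 ≤ k →
        G (T^[p] x) (T^[p + k] x) (T^[p + k] x) ≤ a p * (M + 1) := by
      intro p k hp hk
      have e : T^[p + k] x = T^[p] (T^[k] x) := Function.iterate_add_apply T p k x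
      have h := hcontr x (T^[k] x) (T^[k] x) p hp
      have hy : G (T^[k] x) (T (T^[k] x)) (T (T^[k] x)) ≤ C := by
        have e2 : T (T^[k] x) = T^[k + 1] x := (Function.iterate_succ_apply' T k x).symm
        rw [e2]
        exact hC k (k + 1) (k + 1) hk (le_trans hk (Nat.le_succ k)) (le_trans hk (Nat.le_succ k))
      have hap := (hapos p hp).le
      rw [e]
      refine h.trans (mul_le_mul_of_nonneg_left ?_ hap)
      rw [hM]; linarith
    have key2 : ∀ p k, 1 ≤ p → 1 ≤ k →
        G (T^[p + k] x) (T^[p] x) (T^[p] x) ≤ a p * (M + 1) := by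
      intro p k hp hk
      have e : T^[p + k] x = T^[p] (T^[k] x) := Function.iterate_add_apply T p k x
      have h := hcontr (T^[k] x) x x p hp
      have hy : G (T^[k] x) (T (T^[k] x)) (T (T^[k] x)) ≤ C := by
        have e2 : T (T^[k] x) = T^[k + 1] x := (Function.iterate_succ_apply' T k x).symm
        rw [e2]
        exact hC k (k + 1) (k + 1) hk (le_trans hk (Nat.le_succ k)) (le_trans hk (Nat.le_succ k))
      have hap := (hapos p hp).le
      rw [e]
      refine h.trans (mul_le_mul_of_nonneg_left ?_ hap)
      rw [hM]; linarith
    have hcauchy : GCauchySeq G (fun n => T^[n] x) := by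
      intro ε hε
      obtain ⟨N, hN⟩ := Metric.tendsto_atTop.mp ha0 (ε / (M + 1)) (by positivity)
      refine ⟨max N 1, fun m n hm hn => ?_⟩
      have hm1 : 1 ≤ m := le_trans (le_max_right N 1) hm
      have hn1 : 1 ≤ n := le_trans (le_max_right N 1) hn
      have hmN : N ≤ m := le_trans (le_max_left N 1) hm
      have hnN : N ≤ n := le_trans (le_max_left N 1) hn
      have habs : ∀ q, N ≤ q → a q < ε / (M + 1) := by
        intro q hq
        have := hN q hq
        rw [Real.dist_eq, sub_zero] at this
        exact lt_of_le_of_lt (le_abs_self _) this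
      rcases lt_trichotomy n m with h | h | h
      · have e : m = n + (m - n) := by omega
        have hk : 1 ≤ m - n := by omega
        have hkey := key1 n (m - n) hn1 hk
        rw [← e] at hkey
        calc G (T^[n] x) (T^[m] x) (T^[m] x) ≤ a n * (M + 1) := hkey
          _ < (ε / (M + 1)) * (M + 1) :=
            mul_lt_mul_of_pos_right (habs n hnN) hM1
          _ = ε := div_mul_cancel₀ ε (ne_of_gt hM1)
      · subst h; simpa [hG.eq_zero] using hε
      · have e : n = m + (n - m) := by omega
        have hk : 1 ≤ n - m := by omega
        have hkey := key2 m (n - m) hm1 hk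
        rw [← e] at hkey
        calc G (T^[n] x) (T^[m] x) (T^[m] x) ≤ a m * (M + 1) := hkey
          _ < (ε / (M + 1)) * (M + 1) :=
            mul_lt_mul_of_pos_right (habs m hmN) hM1
          _ = ε := div_mul_cancel₀ ε (ne_of_gt hM1)
    obtain ⟨xs, hxs⟩ := horbcomp x (fun n => T^[n] x) (fun n => ⟨n, rfl⟩) hcauchy
    have h2 : GConverges G (fun i => T (T^[i] x)) (T xs) := horbcont x xs id hxs
    have h3 : GConverges G (fun i => T (T^[i] x)) xs := by
      have := hxs.comp (tendsto_add_atTop_nat 1)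
      simpa [GConverges, Function.comp_def, Function.iterate_succ_apply'] using this
    have hfix : T xs = xs := glim_unique hG (fun i => T (T^[i] x)) (T xs) xs h2 h3
    refine ⟨xs, hfix, fun y hy => ?_⟩
    have h := hcontr y xs xs 1 le_rfl
    simp only [Function.iterate_one, hy, hfix, hG.eq_zero] at h
    have h0 : G y xs xs ≤ 0 := by linarith
    by_contra hne
    have hpos := hG.pos xs y (fun hh => hne hh.symm)
    have e1 : G xs xs y = G y xs xs := by
      rw [hG.symm_right xs xs y, hG.symm_left xs y xs]
    rw [e1] at hpos
    linarith
end

section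
/- Let (X,G,K) be a G-metric type space and T : X → X satisfy the contraction-type condition G(Tⁿx,Tⁿy,Tⁿz) ≤ aₙ[G(x,Tx,Tx)+G(y,Ty,Ty)+G(z,Tz,Tz)] for all x,y,z ∈ X and n ≥ 1 with 0 ≤ a₁ < 1/2. Then for every x₀ ∈ X and every n ≥ 1, G(Tⁿx₀, Tⁿ⁺¹x₀, Tⁿ⁺¹x₀) ≤ aₙ·(1 + 2a₁/(1 − 2a₁))·G(x₀, Tx₀, Tx₀). -/
open Filter Topology

theorem stmt18 {X : Type*} (G : X → X → X → ℝ) (K : ℝ) (hG : IsGMetricType G K)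
    (T : X → X) (a : ℕ → ℝ)
    (hapos : ∀ n, 1 ≤ n → 0 < a n) (ha1 : a 1 < 1 / 2)
    (hcontr : ∀ (x y z : X) (n : ℕ), 1 ≤ n →
      G (T^[n] x) (T^[n] y) (T^[n] z) ≤
        a n * (G x (T x) (T x) + G y (T y) (T y) + G z (T z) (T z))) :
    ∀ (x0 : X) (n : ℕ), 1 ≤ n →
      G (T^[n] x0) (T^[n + 1] x0) (T^[n + 1] x0) ≤
        a n * (1 + 2 * a 1 / (1 - 2 * a 1)) * G x0 (T x0) (T x0) := by
  intro x0 n hn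
  set d0 := G x0 (T x0) (T x0) with hd0
  set d1 := G (T x0) (T (T x0)) (T (T x0)) with hd1
  have hd0nn : 0 ≤ d0 := hG.nonneg _ _ _
  have hd1nn : 0 ≤ d1 := hG.nonneg _ _ _
  have h1 : d1 ≤ a 1 * (d0 + d1 + d1) := by
    have := hcontr x0 (T x0) (T x0) 1 le_rfl
    simpa [Function.iterate_one] using this
  have ha1pos : 0 < a 1 := hapos 1 le_rfl
  have hden : 0 < 1 - 2 * a 1 := by linarith
  have hd1le : d1 ≤ a 1 / (1 - 2 * a 1) * d0 := by
    rw [div_mul_eq_mul_div, le_div_iff₀ hden]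
    nlinarith
  have hmain : G (T^[n] x0) (T^[n + 1] x0) (T^[n + 1] x0) ≤ a n * (d0 + d1 + d1) := by
    have := hcontr x0 (T x0) (T x0) n hn
    simpa [Function.iterate_succ_apply] using this
  have hanpos : 0 < a n := hapos n hn
  calc G (T^[n] x0) (T^[n + 1] x0) (T^[n + 1] x0) ≤ a n * (d0 + d1 + d1) := hmain
    _ ≤ a n * (1 + 2 * a 1 / (1 - 2 * a 1)) * d0 := by
        rw [mul_assoc]
        apply mul_le_mul_of_nonneg_left _ hanpos.le
        have : 2 * a 1 / (1 - 2 * a 1) * d0 = 2 * (a 1 / (1 - 2 * a 1) * d0) := by ring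
        nlinarith
end

section
/- Let (X,G,K) be a G-metric type space where G satisfies the rectangle inequality G(x,y,z) ≤ K[G(x,w,w)+G(w,y,z)], and let T : X → X be such that every Tⁿ is Lipschitzian with Lip(Tⁿ) → 0, and suppose some orbit {Tⁿx : n ≥ 1} is bounded with bound α (so G(T^{n+h}x, Tⁿx, Tⁿx) ≤ α for all n,h ≥ 0). Then (Tⁿx) is a G-Cauchy sequence. -/
open Filter Topology

/-! The Lipschitz bound on Tⁿ gives G(T^{n+h}x, Tⁿx, Tⁿx) ≤ Lip(Tⁿ)·G(Tʰx, x, x) ≤ Lip(Tⁿ)·α,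
uniformly in h. The rectangle inequality through w = a turns this forward bound into the backward
one G(a, b, b) ≤ 2K·G(b, a, a), so G(Tⁿx, Tᵐx, Tᵐx) ≤ 2K·α·Lip(T^{min m n}) → 0. -/

section

variable {X : Type*} {G : X → X → X → ℝ}

theorem gCauchySeq_of_le_of_tendsto {s : ℕ → X} {v : ℕ → ℝ}
    (hle : ∀ m n, G (s n) (s m) (s m) ≤ v (min m n)) (hv : Tendsto v atTop (𝓝 0)) :
    GCauchySeq G s := by
  intro ε hε
  obtain ⟨N, hN⟩ := eventually_atTop.1 (hv.eventually (gt_mem_nhds hε))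
  exact ⟨N, fun m n hm hn => (hle m n).trans_lt (hN _ (le_min hm hn))⟩

namespace IsGMetricTypeRect

variable {K : ℝ}

theorem le_two_mul_swap (hG : IsGMetricTypeRect G K) (a b : X) :
    G a b b ≤ 2 * K * G b a a := by
  calc G a b b = G b b a := by rw [hG.symm_left, hG.symm_right]
    _ ≤ K * (G b a a + G a b a) := hG.rect b b a a
    _ = 2 * K * G b a a := by rw [hG.symm_left a b a]; ring

theorem le_two_mul_min_of_forall_add_le (hG : IsGMetricTypeRect G K) {s : ℕ → X} {u : ℕ → ℝ}
    (hu : ∀ n h, G (s (n + h)) (s n) (s n) ≤ u n) (m n : ℕ) :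
    G (s n) (s m) (s m) ≤ 2 * K * u (min m n) := by
  rcases le_total m n with hmn | hnm
  · obtain ⟨h, rfl⟩ := Nat.exists_eq_add_of_le hmn
    rw [min_eq_left hmn]
    calc G (s (m + h)) (s m) (s m) ≤ u m := hu m h
      _ ≤ 2 * K * u m :=
          le_mul_of_one_le_left ((hG.nonneg _ _ _).trans (hu m h)) (by linarith [hG.K_ge_one])
  · obtain ⟨h, rfl⟩ := Nat.exists_eq_add_of_le hnm
    rw [min_eq_right hnm]
    calc G (s n) (s (n + h)) (s (n + h)) ≤ 2 * K * G (s (n + h)) (s n) (s n) :=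
          hG.le_two_mul_swap _ _
      _ ≤ 2 * K * u n := mul_le_mul_of_nonneg_left (hu n h) (by linarith [hG.K_ge_one])

theorem gCauchySeq_of_forall_add_le (hG : IsGMetricTypeRect G K) {s : ℕ → X} {u : ℕ → ℝ}
    (hu : ∀ n h, G (s (n + h)) (s n) (s n) ≤ u n) (hu0 : Tendsto u atTop (𝓝 0)) :
    GCauchySeq G s :=
  gCauchySeq_of_le_of_tendsto (hG.le_two_mul_min_of_forall_add_le hu)
    (by simpa using hu0.const_mul (2 * K))

end IsGMetricTypeRect

end

theorem stmt19 {X : Type*} (G : X → X → X → ℝ) (K : ℝ) (hG : IsGMetricTypeRect G K)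
    (T : X → X) (lip : ℕ → ℝ) (hlipnn : ∀ n, 0 ≤ lip n)
    (hlip : ∀ (n : ℕ) (x y z : X), G (T^[n] x) (T^[n] y) (T^[n] z) ≤ lip n * G x y z)
    (hlip0 : Tendsto lip atTop (nhds 0))
    (x : X) (α : ℝ)
    (hbound : ∀ n h : ℕ, G (T^[n + h] x) (T^[n] x) (T^[n] x) ≤ α) :
    GCauchySeq G (fun n => T^[n] x) := by
  refine hG.gCauchySeq_of_forall_add_le (u := fun n => lip n * α) (fun n h => ?_)
    (by simpa using hlip0.mul_const α)
  calc G (T^[n + h] x) (T^[n] x) (T^[n] x) = G (T^[n] (T^[h] x)) (T^[n] x) (T^[n] x) := by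
        rw [Function.iterate_add_apply]
    _ ≤ lip n * G (T^[h] x) x x := hlip n _ x x
    _ ≤ lip n * α := mul_le_mul_of_nonneg_left (by simpa using hbound 0 h) (hlipnn n)
end
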